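/- arXiv:2001.05051 — 2 statements merged into one kernel-verified Lean document; each statement's English description precedes it below -/
import Mathlib

section
/- Let G be a (finite simple) graph, and let (X, Y) be an admissible pair of collections of subsets of V(G). If X has an independent set of representatives R_X in G and Y has an independent set of representatives R_Y in G, then G has an independent set R ⊆ R_X ∪ R_Y that contains at least one vertex from each set in X and at least one vertex from each set in Y. -/
open SimpleGraph

/-- Every digraph whose arcs all cross between two disjoint sides has a kernel. -/
theorem kernel_bipartite {V : Type} [DecidableEq V] (SX SY : Finset V)
    (hdisj : ∀ v, v ∈ SX → v ∉ SY)
    (arc : V → V → Prop)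
    (harc : ∀ u v, arc u v → (u ∈ SX ∧ v ∈ SY) ∨ (u ∈ SY ∧ v ∈ SX)) :
    ∀ S : Finset V,
    ∃ K ⊆ S, (∀ u ∈ K, ∀ v ∈ K, ¬ arc u v) ∧
      (∀ v ∈ S, v ∉ K → ∃ k ∈ K, arc v k) := by
  classical
  intro S
  induction S using Finset.strongInduction with
  | _ S ih =>
    by_cases h : ∃ v ∈ S, ∀ k ∈ S, ¬ arc v k
    · obtain ⟨v, hv, hvno⟩ := h
      set S' : Finset V := (S.erase v).filter (fun u => ¬ arc u v) with hS'def
      have hS'sub : S' ⊆ S := by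
        intro u hu
        exact Finset.mem_of_mem_erase (Finset.mem_of_mem_filter u hu)
      have hssub : S' ⊂ S := by
        refine Finset.ssubset_iff_of_subset hS'sub |>.mpr ⟨v, hv, ?_⟩
        intro hvS'
        exact (Finset.notMem_erase v S) (Finset.mem_of_mem_filter v hvS')
      obtain ⟨K', hK'sub, hK'ind, hK'dom⟩ := ih S' hssub
      refine ⟨insert v K', ?_, ?_, ?_⟩
      · intro u hu
        rcases Finset.mem_insert.mp hu with rfl | hu
        · exact hv
        · exact hS'sub (hK'sub hu)
      · intro u hu w hw
        rcases Finset.mem_insert.mp hu with h1 | h1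
        · subst h1
          rcases Finset.mem_insert.mp hw with h2 | h2
          · subst h2; exact hvno _ hv
          · exact hvno w (hS'sub (hK'sub h2))
        · rcases Finset.mem_insert.mp hw with h2 | h2
          · subst h2
            have := hK'sub h1
            rw [hS'def] at this
            exact (Finset.mem_filter.mp this).2
          · exact hK'ind u h1 w h2
      · intro u hu hunotK
        by_cases huS' : u ∈ S'
        · have hunotK' : u ∉ K' := fun h => hunotK (Finset.mem_insert_of_mem h)
          obtain ⟨k, hk, hak⟩ := hK'dom u huS' hunotK'
          exact ⟨k, Finset.mem_insert_of_mem hk, hak⟩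
        · have hune : u ≠ v := fun h => hunotK (h ▸ Finset.mem_insert_self v K')
          have : arc u v := by
            by_contra hnc
            exact huS' (Finset.mem_filter.mpr ⟨Finset.mem_erase.mpr ⟨hune, hu⟩, hnc⟩)
          exact ⟨v, Finset.mem_insert_self v K', this⟩
    · push_neg at h
      refine ⟨S ∩ SX, Finset.inter_subset_left, ?_, ?_⟩
      · intro u hu w hw hac
        rcases harc u w hac with ⟨_, hw'⟩ | ⟨hu', _⟩
        · exact hdisj w (Finset.mem_inter.mp hw).2 hw'
        · exact hdisj u (Finset.mem_inter.mp hu).2 hu'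
      · intro u hu hunot
        obtain ⟨k, hkS, hak⟩ := h u hu
        rcases harc u k hak with ⟨hu', _⟩ | ⟨_, hk'⟩
        · exact absurd (Finset.mem_inter.mpr ⟨hu, hu'⟩) hunot
        · exact ⟨k, Finset.mem_inter.mpr ⟨hkS, hk'⟩, hak⟩

theorem stmt_9 {V : Type} [Fintype V] [DecidableEq V]
    (G : SimpleGraph V) (𝒳 𝒴 : Finset (Finset V))
    (hXdisj : ∀ A ∈ 𝒳, ∀ B ∈ 𝒳, A ≠ B → Disjoint A B)
    (hYdisj : ∀ A ∈ 𝒴, ∀ B ∈ 𝒴, A ≠ B → Disjoint A B)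
    -- the pair (𝒳, 𝒴) is admissible for G
    (hadm : ∀ u v, G.Adj u v →
      (∃ A ∈ 𝒳, u ∈ A ∧ v ∈ A) ∨ (∃ B ∈ 𝒴, u ∈ B ∧ v ∈ B) ∨
      (∀ A ∈ 𝒳, u ∉ A ∧ v ∉ A) ∨ (∀ B ∈ 𝒴, u ∉ B ∧ v ∉ B))
    (RX RY : Finset V)
    -- RX is an ISR of 𝒳
    (hRX : (∀ u ∈ RX, ∀ v ∈ RX, ¬ G.Adj u v) ∧
      (∀ A ∈ 𝒳, (RX ∩ A).card = 1) ∧ RX ⊆ 𝒳.biUnion id)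
    -- RY is an ISR of 𝒴
    (hRY : (∀ u ∈ RY, ∀ v ∈ RY, ¬ G.Adj u v) ∧
      (∀ B ∈ 𝒴, (RY ∩ B).card = 1) ∧ RY ⊆ 𝒴.biUnion id) :
    ∃ R : Finset V, R ⊆ RX ∪ RY ∧
      (∀ u ∈ R, ∀ v ∈ R, ¬ G.Adj u v) ∧
      (∀ A ∈ 𝒳, ∃ x ∈ R, x ∈ A) ∧
      (∀ B ∈ 𝒴, ∃ x ∈ R, x ∈ B) := by
  classical
  obtain ⟨hRXind, hRXcard, hRXsub⟩ := hRX
  obtain ⟨hRYind, hRYcard, hRYsub⟩ := hRY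
  -- the conflict digraph: arc u v means "v can take over the duty of u"
  set arc : V → V → Prop := fun u v =>
    G.Adj u v ∧ ((u ∈ RX ∧ v ∈ RY ∧ v ∉ RX ∧ ∃ A ∈ 𝒳, u ∈ A ∧ v ∈ A) ∨
      (u ∈ RY ∧ u ∉ RX ∧ v ∈ RX ∧ ∃ B ∈ 𝒴, u ∈ B ∧ v ∈ B)) with harcdef
  have hdisj : ∀ v, v ∈ RX → v ∉ RY \ RX := by
    intro v hv hv'
    exact (Finset.mem_sdiff.mp hv').2 hv
  have harc : ∀ u v, arc u v →
      (u ∈ RX ∧ v ∈ RY \ RX) ∨ (u ∈ RY \ RX ∧ v ∈ RX) := by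
    intro u v ⟨_, h⟩
    rcases h with ⟨hu, hv1, hv2, _⟩ | ⟨hu1, hu2, hv, _⟩
    · exact Or.inl ⟨hu, Finset.mem_sdiff.mpr ⟨hv1, hv2⟩⟩
    · exact Or.inr ⟨Finset.mem_sdiff.mpr ⟨hu1, hu2⟩, hv⟩
  -- every G-edge inside RX ∪ RY is oriented
  have horient : ∀ u ∈ RX ∪ RY, ∀ v ∈ RX ∪ RY, G.Adj u v → arc u v ∨ arc v u := by
    intro u hu v hv hadj
    have key : ∀ x y, x ∈ RX → y ∈ RY → G.Adj x y → arc x y ∨ arc y x := by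
      intro x y hx hy hxy
      have hynx : y ∉ RX := fun h => hRXind x hx y h hxy
      have hxny : x ∉ RY := fun h => hRYind x h y hy hxy
      rcases hadm x y hxy with hA | hB | hnoX | hnoY
      · exact Or.inl ⟨hxy, Or.inl ⟨hx, hy, hynx, hA⟩⟩
      · refine Or.inr ⟨hxy.symm, Or.inr ⟨hy, hynx, hx, ?_⟩⟩
        obtain ⟨B, hB1, hB2, hB3⟩ := hB
        exact ⟨B, hB1, hB3, hB2⟩
      · obtain ⟨A, hA, hxA⟩ := Finset.mem_biUnion.mp (hRXsub hx)
        exact absurd hxA (hnoX A hA).1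
      · obtain ⟨B, hB, hyB⟩ := Finset.mem_biUnion.mp (hRYsub hy)
        exact absurd hyB (hnoY B hB).2
    rcases Finset.mem_union.mp hu with hu' | hu' <;>
      rcases Finset.mem_union.mp hv with hv' | hv'
    · exact absurd hadj (hRXind u hu' v hv')
    · exact key u v hu' hv' hadj
    · exact (key v u hv' hu' hadj.symm).symm
    · exact absurd hadj (hRYind u hu' v hv')
  obtain ⟨K, hKsub, hKind, hKdom⟩ :=
    kernel_bipartite RX (RY \ RX) hdisj arc harc (RX ∪ RY)
  refine ⟨K, hKsub, ?_, ?_, ?_⟩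
  · intro u hu v hv hadj
    rcases horient u (hKsub hu) v (hKsub hv) hadj with h | h
    · exact hKind u hu v hv h
    · exact hKind v hv u hu h
  · -- 𝒳 is covered
    intro A hA
    obtain ⟨x, hx⟩ := Finset.card_eq_one.mp (hRXcard A hA)
    have hxRX : x ∈ RX := (Finset.mem_inter.mp (hx ▸ Finset.mem_singleton_self x)).1
    have hxA : x ∈ A := (Finset.mem_inter.mp (hx ▸ Finset.mem_singleton_self x)).2
    by_cases hxK : x ∈ K
    · exact ⟨x, hxK, hxA⟩
    · obtain ⟨k, hkK, hak⟩ := hKdom x (Finset.mem_union_left _ hxRX) hxK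
      obtain ⟨_, h⟩ := hak
      rcases h with ⟨_, _, _, A', hA', hxA', hkA'⟩ | ⟨_, hnx, _, _⟩
      · have : A = A' := by
          by_contra hne
          exact Finset.disjoint_left.mp (hXdisj A hA A' hA' hne) hxA hxA'
        exact ⟨k, hkK, this ▸ hkA'⟩
      · exact absurd hxRX hnx
  · -- 𝒴 is covered
    intro B hB
    obtain ⟨y, hy⟩ := Finset.card_eq_one.mp (hRYcard B hB)
    have hyRY : y ∈ RY := (Finset.mem_inter.mp (hy ▸ Finset.mem_singleton_self y)).1
    have hyB : y ∈ B := (Finset.mem_inter.mp (hy ▸ Finset.mem_singleton_self y)).2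
    by_cases hyK : y ∈ K
    · exact ⟨y, hyK, hyB⟩
    · obtain ⟨k, hkK, hak⟩ := hKdom y (Finset.mem_union_right _ hyRY) hyK
      obtain ⟨hadj, h⟩ := hak
      rcases h with ⟨_, hkRY, _, _⟩ | ⟨_, _, _, B', hB', hyB', hkB'⟩
      · exact absurd hadj (hRYind y hyRY k hkRY)
      · have : B = B' := by
          by_contra hne
          exact Finset.disjoint_left.mp (hYdisj B hB B' hB' hne) hyB hyB'
        exact ⟨k, hkK, this ▸ hkB'⟩
end

section
/- Let H be a (finite simple) graph with maximum degree at most 2, and let G be obtained from H by gluing in vertex-disjoint copies of K_4. Let X_1, ..., X_p be the vertex sets of the cycles of H and let T be the set of triangles in H. Then the family (X_1, ..., X_p) has a partial independent set of representatives in G of size at least p − ⌊|T|/4⌋. -/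
open SimpleGraph

/-- `G` is obtained from `H` by gluing in vertex-disjoint copies of `K₄`. -/
def GluedK4 {V : Type} [DecidableEq V] (H G : SimpleGraph V) : Prop :=
  ∃ (q : ℕ) (Y : Fin q → Finset V),
    (∀ j, (Y j).card = 4) ∧
    (∀ i j, i ≠ j → Disjoint (Y i) (Y j)) ∧
    ∀ u v, G.Adj u v ↔ H.Adj u v ∨ (u ≠ v ∧ ∃ j, u ∈ Y j ∧ v ∈ Y j)

/-- `s` is the vertex set of a cycle subgraph of `H`. -/
def IsCycleSet {V : Type} [DecidableEq V] (H : SimpleGraph V) (s : Finset V) : Prop :=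
  ∃ (v : V) (w : H.Walk v v), w.IsCycle ∧ w.support.toFinset = s

/-!
In a graph `H` of maximum degree two the cycles are connected components, hence pairwise
disjoint, and an edge of `G` between vertices of distinct cycles comes from a glued `K₄`. Colour
each vertex by the `K₄` containing it, or by itself if there is none: representatives of distinct
colours, one in each of several cycles, form an independent set of `G`. They are found by Hall's
theorem, where every cycle may also use one of `⌊|T|/4⌋` dummy colours: `S` cycles cover at least
`4|S| - |S ∩ T|` vertices, and a colour class has at most four vertices.
-/

open Finset Function

section Transversal

theorem mul_card_le_sum_card_add_card_filter_lt {ι V : Type*} (X : ι → Finset V) {k : ℕ}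
    (S : Finset ι) (hXk : ∀ i ∈ S, k ≤ #(X i) + 1) :
    k * #S ≤ ∑ i ∈ S, #(X i) + #{i ∈ S | #(X i) < k} := by
  rw [card_filter, ← sum_add_distrib, mul_comm, ← smul_eq_mul, ← sum_const]
  refine sum_le_sum fun i hi => ?_
  have := hXk i hi
  split_ifs <;> omega

variable {ι V B : Type*} [Fintype V] [DecidableEq V] [DecidableEq B] (X : ι → Finset V)
  (c : V → B) {k : ℕ}

theorem card_le_card_image_biUnion_add_div (hX : Pairwise (Disjoint on X)) (hk : 0 < k)
    (hc : ∀ b, #{v | c v = b} ≤ k) (hXk : ∀ i, k ≤ #(X i) + 1) (S : Finset ι) :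
    #S ≤ #((S.biUnion X).image c) + #{i ∈ S | #(X i) < k} / k := by
  have hunion : #(S.biUnion X) = ∑ i ∈ S, #(X i) :=
    card_biUnion fun i _ j _ hij => hX hij
  have hfibre : #(S.biUnion X) ≤ k * #((S.biUnion X).image c) :=
    card_le_mul_card_image _ k fun b _ =>
      (card_le_card (filter_subset_filter _ (subset_univ _))).trans (hc b)
  have := mul_card_le_sum_card_add_card_filter_lt X S fun i _ => hXk i
  rw [← Nat.sub_le_iff_le_add', Nat.le_div_iff_mul_le hk, Nat.sub_mul, mul_comm #S,
    mul_comm #(_ : Finset B)]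
  omega

/-- Hall's condition holds once every set may also use any of `#{i | #(X i) < k} / k` dummy
colours. -/
theorem exists_injective_mem_image_disjSum [Fintype ι] (hX : Pairwise (Disjoint on X))
    (hk : 0 < k) (hc : ∀ b, #{v | c v = b} ≤ k) (hXk : ∀ i, k ≤ #(X i) + 1) :
    ∃ f : ι → B ⊕ Fin (#({i | #(X i) < k} : Finset ι) / k),
      Injective f ∧ ∀ i, f i ∈ ((X i).image c).disjSum univ := by
  set d := #({i | #(X i) < k} : Finset ι) / k
  refine (all_card_le_biUnion_card_iff_exists_injective _).mp fun S => ?_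
  rcases S.eq_empty_or_nonempty with rfl | ⟨i₀, hi₀⟩
  · simp
  have hsub : ((S.biUnion X).image c).disjSum (univ : Finset (Fin d)) ⊆
      S.biUnion fun i => ((X i).image c).disjSum univ := by
    rintro (b | e) hx <;>
      simp only [inl_mem_disjSum, inr_mem_disjSum, mem_image, mem_biUnion] at hx ⊢
    · obtain ⟨v, ⟨i, hi, hv⟩, rfl⟩ := hx
      exact ⟨i, hi, v, hv, rfl⟩
    · exact ⟨i₀, hi₀, mem_univ e⟩
  calc #S ≤ #((S.biUnion X).image c) + #{i ∈ S | #(X i) < k} / k :=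
        card_le_card_image_biUnion_add_div X c hX hk hc hXk S
    _ ≤ #((S.biUnion X).image c) + d := by
        gcongr
        exact Nat.div_le_div_right (card_le_card (filter_subset_filter _ (subset_univ S)))
    _ = #(((S.biUnion X).image c).disjSum (univ : Finset (Fin d))) := by
        rw [card_disjSum, card_univ, Fintype.card_fin]
    _ ≤ _ := card_le_card hsub

theorem exists_partial_transversal_injOn_colour [Fintype ι] (hX : Pairwise (Disjoint on X))
    (hk : 2 ≤ k) (hc : ∀ b, #{v | c v = b} ≤ k) (hXk : ∀ i, k ≤ #(X i) + 1) :
    ∃ (I : Finset ι) (r : ι → V), Fintype.card ι - #{i | #(X i) < k} / k ≤ #I ∧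
      (∀ i ∈ I, r i ∈ X i) ∧ Set.InjOn (c ∘ r) I := by
  obtain ⟨f, hf, hfN⟩ := exists_injective_mem_image_disjSum X c hX (by omega) hc hXk
  have hrep : ∀ i, ∃ v ∈ X i, (f i).isLeft → f i = .inl (c v) := by
    intro i
    rcases hfi : f i with b | e
    · have := hfN i
      rw [hfi, inl_mem_disjSum, mem_image] at this
      obtain ⟨v, hv, rfl⟩ := this
      exact ⟨v, hv, fun _ => rfl⟩
    · obtain ⟨v, hv⟩ := card_pos.mp (show 0 < #(X i) by have := hXk i; omega)
      exact ⟨v, hv, fun h => by simp at h⟩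
  choose r hrX hrf using hrep
  refine ⟨({i | (f i).isLeft} : Finset ι), r, ?_, fun i _ => hrX i, ?_⟩
  · have hdummy : #{i | ¬ (f i).isLeft} ≤ #({i | #(X i) < k} : Finset ι) / k := by
      refine (card_le_card_of_injOn f (t := univ.map Embedding.inr) (fun i hi => ?_)
        hf.injOn).trans (by simp)
      simp only [coe_filter, mem_univ, true_and, Set.mem_ofPred_eq, Sum.not_isLeft,
        Sum.isRight_iff] at hi
      obtain ⟨e, he⟩ := hi
      simpa using ⟨e, he.symm⟩
    have := card_filter_add_card_filter_not (s := univ) (fun i => (f i).isLeft)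
    rw [card_univ] at this
    omega
  · intro i hi i' hi' h
    simp only [coe_filter, mem_univ, true_and, Set.mem_ofPred_eq] at hi hi'
    exact hf ((hrf i hi).trans ((congrArg Sum.inl h).trans (hrf i' hi').symm))

theorem image_inter_eq_singleton {ι V : Type*} [DecidableEq V] {X : ι → Finset V}
    (hX : Pairwise (Disjoint on X)) {I : Finset ι} {r : ι → V} (hr : ∀ i ∈ I, r i ∈ X i)
    {i : ι} (hi : i ∈ I) : I.image r ∩ X i = {r i} := by
  ext v
  simp only [mem_inter, mem_image, mem_singleton]
  constructor
  · rintro ⟨⟨i', hi', rfl⟩, hv⟩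
    by_contra hne
    exact disjoint_left.mp (hX fun h : i' = i => hne (congrArg r h)) (hr i' hi') hv
  · rintro rfl
    exact ⟨⟨i, hi, rfl⟩, hr i hi⟩

end Transversal

section BlockColour

variable {κ V : Type*} (Y : κ → Finset V)

open Classical in
noncomputable def blockColour (v : V) : κ ⊕ V :=
  if h : ∃ j, v ∈ Y j then .inl h.choose else .inr v

variable {Y}

theorem blockColour_of_mem (hY : Pairwise (Disjoint on Y)) {v : V} {j : κ} (hv : v ∈ Y j) :
    blockColour Y v = .inl j := by
  have h : ∃ j, v ∈ Y j := ⟨j, hv⟩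
  rw [blockColour, dif_pos h]
  by_contra hne
  exact disjoint_left.mp (hY fun e => hne (congrArg Sum.inl e)) h.choose_spec hv

theorem card_blockColour_eq_le [Fintype V] [DecidableEq κ] [DecidableEq V] {k : ℕ}
    (hY : ∀ j, #(Y j) ≤ k) (hk : 1 ≤ k) (b : κ ⊕ V) : #{v | blockColour Y v = b} ≤ k := by
  rcases b with j | w
  · refine (card_le_card fun v hv => ?_).trans (hY j)
    rw [mem_filter_univ, blockColour] at hv
    split_ifs at hv with h
    · exact Sum.inl_injective hv ▸ h.choose_spec
  · refine (card_le_card fun v hv => ?_).trans ((card_singleton w).trans_le hk)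
    rw [mem_filter_univ, blockColour] at hv
    split_ifs at hv
    exact mem_singleton.mpr (Sum.inr_injective hv)

end BlockColour

theorem GluedK4.exists_colouring {V : Type} [Fintype V] [DecidableEq V] {H G : SimpleGraph V}
    (hglue : GluedK4 H G) : ∃ (q : ℕ) (c : V → Fin q ⊕ V),
      (∀ b, #{v | c v = b} ≤ 4) ∧ ∀ u v, G.Adj u v → H.Adj u v ∨ c u = c v := by
  obtain ⟨q, Y, hY4, hYdisj, hGadj⟩ := hglue
  refine ⟨q, blockColour Y, card_blockColour_eq_le (fun j => (hY4 j).le) (by norm_num),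
    fun u v huv => ?_⟩
  rcases (hGadj u v).mp huv with hH | ⟨-, j, hu, hv⟩
  · exact .inl hH
  · exact .inr ((blockColour_of_mem hYdisj hu).trans (blockColour_of_mem hYdisj hv).symm)

namespace IsCycleSet

variable {V : Type} [DecidableEq V] {H : SimpleGraph V} {s t : Finset V}

theorem three_le_card (hs : IsCycleSet H s) : 3 ≤ s.card := by
  obtain ⟨v, c, hc, rfl⟩ := hs
  have hsub : c.support.tail.toFinset ⊆ c.support.toFinset := by
    intro u hu
    simpa using List.mem_of_mem_tail (List.mem_toFinset.mp hu)
  calc 3 ≤ c.length := hc.three_le_length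
    _ = c.support.tail.toFinset.card := by
      rw [List.toFinset_card_of_nodup hc.support_nodup, List.length_tail, Walk.length_support]
      rfl
    _ ≤ _ := Finset.card_le_card hsub

/-- A cycle already uses two edges at each of its vertices, so when the maximum degree is two no
edge leaves it. -/
theorem mem_of_adj [Fintype V] [DecidableRel H.Adj] (hΔ : ∀ v, H.degree v ≤ 2)
    (hs : IsCycleSet H s) {u v : V} (hu : u ∈ s) (huv : H.Adj u v) : v ∈ s := by
  obtain ⟨x, c, hc, rfl⟩ := hs
  have hu' : u ∈ c.support := by simpa using hu
  have hnbr : c.toSubgraph.neighborSet u = H.neighborSet u := by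
    refine Set.eq_of_subset_of_ncard_le (c.toSubgraph.neighborSet_subset u) ?_ (Set.toFinite _)
    rw [hc.ncard_neighborSet_toSubgraph_eq_two hu', Set.ncard_eq_toFinset_card',
      Set.toFinset_card, card_neighborSet_eq_degree]
    exact hΔ u
  have hadj : c.toSubgraph.Adj u v := by
    rw [← Subgraph.mem_neighborSet, hnbr]; exact huv
  simpa using c.mem_verts_toSubgraph.mp (c.toSubgraph.edge_vert hadj.symm)

theorem mem_iff_reachable [Fintype V] [DecidableRel H.Adj] (hΔ : ∀ v, H.degree v ≤ 2)
    (hs : IsCycleSet H s) {u v : V} (hu : u ∈ s) : v ∈ s ↔ H.Reachable u v := by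
  refine ⟨fun hv => ?_, fun h => ?_⟩
  · obtain ⟨x, c, -, rfl⟩ := hs
    have reach {w} (hw : w ∈ c.support.toFinset) : H.Reachable x w :=
      (c.takeUntil w (by simpa using hw)).reachable
    exact (reach hu).symm.trans (reach hv)
  · obtain ⟨p⟩ := h
    induction p with
    | nil => exact hu
    | cons huw _ ih => exact ih (hs.mem_of_adj hΔ hu huw)

theorem eq_of_mem [Fintype V] [DecidableRel H.Adj] (hΔ : ∀ v, H.degree v ≤ 2)
    (hs : IsCycleSet H s) (ht : IsCycleSet H t) {u : V} (hus : u ∈ s) (hut : u ∈ t) :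
    s = t := by
  ext v
  rw [hs.mem_iff_reachable hΔ hus, ht.mem_iff_reachable hΔ hut]

theorem pairwise_disjoint [Fintype V] [DecidableRel H.Adj] (hΔ : ∀ v, H.degree v ≤ 2) :
    Pairwise (Disjoint on fun s : {s // IsCycleSet H s} => s.1) := fun s t hst =>
  disjoint_left.mpr fun _ hus hut => hst (Subtype.ext (s.2.eq_of_mem hΔ t.2 hus hut))

open Classical in
theorem ncard_setOf_isCycleSet_card_eq_three [Fintype V] (H : SimpleGraph V) :
    {s | IsCycleSet H s ∧ s.card = 3}.ncard = #{s : {s // IsCycleSet H s} | #s.1 < 4} := by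
  rw [← Set.ncard_coe_finset, ← Set.ncard_image_of_injective _ Subtype.val_injective]
  congr 1
  ext s
  simp only [Set.mem_ofPred_eq, coe_filter, mem_univ, true_and, Set.mem_image, Subtype.exists,
    exists_and_right, exists_eq_right]
  exact ⟨fun ⟨hs, h3⟩ => ⟨hs, by omega⟩, fun ⟨hs, h4⟩ => ⟨hs, by have := hs.three_le_card; omega⟩⟩

end IsCycleSet

theorem stmt_11 {V : Type} [Fintype V] [DecidableEq V]
    (H G : SimpleGraph V) [DecidableRel H.Adj]
    (hΔ : ∀ v, H.degree v ≤ 2)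
    (hglue : GluedK4 H G) :
    -- the family of vertex sets of cycles of H has a partial ISR in G of size
    -- at least p − ⌊|𝒯|/4⌋
    ∃ (R : Finset V) (𝒮 : Set (Finset V)),
      𝒮 ⊆ {s : Finset V | IsCycleSet H s} ∧
      {s : Finset V | IsCycleSet H s}.ncard
          - {s : Finset V | IsCycleSet H s ∧ s.card = 3}.ncard / 4 ≤ 𝒮.ncard ∧
      (∀ u ∈ R, ∀ v ∈ R, ¬ G.Adj u v) ∧
      (∀ s ∈ 𝒮, (R ∩ s).card = 1) ∧
      (↑R : Set V) ⊆ ⋃ s ∈ 𝒮, (↑s : Set V) := by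
  classical
  obtain ⟨q, c, hc, hGadj⟩ := hglue.exists_colouring
  have hX := IsCycleSet.pairwise_disjoint hΔ (H := H)
  obtain ⟨I, r, hcard, hrX, hinj⟩ := exists_partial_transversal_injOn_colour
    (fun s : {s // IsCycleSet H s} => s.1) c hX (k := 4) (by norm_num) hc
    (fun s => by have := s.2.three_le_card; omega)
  refine ⟨I.image r, ↑(I.map (Embedding.subtype _)), ?_, ?_, ?_, ?_, ?_⟩
  · intro s hs
    obtain ⟨i, -, rfl⟩ := mem_map.mp hs
    exact i.2
  · rw [IsCycleSet.ncard_setOf_isCycleSet_card_eq_three, ← Nat.card_coe_set_eq,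
      Nat.card_eq_fintype_card, Set.ncard_coe_finset, card_map]
    exact hcard
  · simp only [mem_image]
    rintro _ ⟨i, hi, rfl⟩ _ ⟨i', hi', rfl⟩ hadj
    suffices i = i' by subst this; exact G.irrefl hadj
    rcases hGadj _ _ hadj with hH | hcol
    · exact Subtype.ext (i.2.eq_of_mem hΔ i'.2 (i.2.mem_of_adj hΔ (hrX i hi) hH) (hrX i' hi'))
    · exact hinj hi hi' hcol
  · intro s hs
    obtain ⟨i, hi, rfl⟩ := mem_map.mp hs
    rw [Embedding.subtype_apply, image_inter_eq_singleton hX hrX hi, card_singleton]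
  · intro v hv
    obtain ⟨i, hi, rfl⟩ := mem_image.mp hv
    exact Set.mem_biUnion (mem_map_of_mem _ hi) (hrX i hi)
end
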